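/- arXiv:1709.06205 — 2 statements merged into one kernel-verified Lean document; each statement's English description precedes it below -/
import Mathlib

section
/- The map τ: LT × LT → U(1) defined on the decomposition LT = T × Π_T × ΩT_0 by τ((t₁,n₁,l₁),(t₂,n₂,l₂)) = t₂^{k n₁} · exp(i ∫_{S¹} l₁ (dl₂/dθ) dθ) is a group 2-cocycle on LT with values in U(1), i.e., τ(g₁,g₂)τ(g₁g₂,g₃) = τ(g₂,g₃)τ(g₁,g₂g₃) and τ(g,e)=τ(e,g)=1. -/
open scoped Real

/-- An element of `ΩT₀`: a smooth `2π`-periodic real function with zero mean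
(base-point preserving loop in the identity component). -/
def IsZeroMeanLoop (l : ℝ → ℝ) : Prop :=
  ContDiff ℝ (⊤ : ℕ∞) l ∧ Function.Periodic l (2 * π) ∧ (∫ θ in (0:ℝ)..(2 * π), l θ) = 0

/-- Multiplication on `LT = T × Π_T × ΩT₀` (componentwise; loops add pointwise). -/
noncomputable def mulLT (g₁ g₂ : Circle × ℤ × (ℝ → ℝ)) : Circle × ℤ × (ℝ → ℝ) :=
  (g₁.1 * g₂.1, g₁.2.1 + g₂.2.1, g₁.2.2 + g₂.2.2)

/-- The 2-cocycle `τ((t₁,n₁,l₁),(t₂,n₂,l₂)) = t₂^{k n₁} · exp(i ∫ l₁ (dl₂/dθ) dθ)`,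
viewed with values in `ℂ` (lying on the unit Circle). -/
noncomputable def tauLT (k : ℤ) (g₁ g₂ : Circle × ℤ × (ℝ → ℝ)) : ℂ :=
  (g₂.1 : ℂ) ^ (k * g₁.2.1) *
    Complex.exp (Complex.I * (∫ θ in (0:ℝ)..(2 * π), g₁.2.2 θ * deriv g₂.2.2 θ))

/-- `τ` is a group 2-cocycle on `LT` with values in `U(1)`:
it satisfies the cocycle identity and the normalization `τ(g,e) = τ(e,g) = 1`. -/
theorem stmt0 (k : ℤ) :
    (∀ g₁ g₂ g₃ : Circle × ℤ × (ℝ → ℝ),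
      IsZeroMeanLoop g₁.2.2 → IsZeroMeanLoop g₂.2.2 → IsZeroMeanLoop g₃.2.2 →
      tauLT k g₁ g₂ * tauLT k (mulLT g₁ g₂) g₃ = tauLT k g₂ g₃ * tauLT k g₁ (mulLT g₂ g₃)) ∧
    (∀ g : Circle × ℤ × (ℝ → ℝ), IsZeroMeanLoop g.2.2 →
      tauLT k g (1, 0, 0) = 1 ∧ tauLT k (1, 0, 0) g = 1) := by
  constructor
  · rintro ⟨t₁, n₁, l₁⟩ ⟨t₂, n₂, l₂⟩ ⟨t₃, n₃, l₃⟩ h₁ h₂ h₃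
    have c₁ : Continuous l₁ := h₁.1.continuous
    have c₂ : Continuous l₂ := h₂.1.continuous
    have c₂' : Continuous (deriv l₂) := h₂.1.continuous_deriv (by simp)
    have c₃' : Continuous (deriv l₃) := h₃.1.continuous_deriv (by simp)
    have hd : deriv (l₂ + l₃) = fun θ => deriv l₂ θ + deriv l₃ θ := by
      funext θ
      exact deriv_add (h₂.1.differentiable (by simp) θ) (h₃.1.differentiable (by simp) θ)
    have hi12 : IntervalIntegrable (fun θ => l₁ θ * deriv l₂ θ) MeasureTheory.volume 0 (2*π) :=
      (c₁.mul c₂').intervalIntegrable _ _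
    have hi13 : IntervalIntegrable (fun θ => l₁ θ * deriv l₃ θ) MeasureTheory.volume 0 (2*π) :=
      (c₁.mul c₃').intervalIntegrable _ _
    have hi23 : IntervalIntegrable (fun θ => l₂ θ * deriv l₃ θ) MeasureTheory.volume 0 (2*π) :=
      (c₂.mul c₃').intervalIntegrable _ _
    have hI1 : (∫ θ in (0:ℝ)..(2*π), (l₁ + l₂) θ * deriv l₃ θ)
        = (∫ θ in (0:ℝ)..(2*π), l₁ θ * deriv l₃ θ) + ∫ θ in (0:ℝ)..(2*π), l₂ θ * deriv l₃ θ := by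
      rw [← intervalIntegral.integral_add hi13 hi23]
      apply intervalIntegral.integral_congr
      intro θ _
      simp [add_mul]
    have hI2 : (∫ θ in (0:ℝ)..(2*π), l₁ θ * deriv (l₂ + l₃) θ)
        = (∫ θ in (0:ℝ)..(2*π), l₁ θ * deriv l₂ θ) + ∫ θ in (0:ℝ)..(2*π), l₁ θ * deriv l₃ θ := by
      rw [← intervalIntegral.integral_add hi12 hi13]
      apply intervalIntegral.integral_congr
      intro θ _
      simp [hd, mul_add]
    simp only [tauLT, mulLT]
    rw [hI1, hI2]
    push_cast
    simp only [mul_zpow, mul_add, zpow_add₀ (Circle.coe_ne_zero t₃), Complex.exp_add]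
    ring
  · rintro ⟨t, n, l⟩ h
    have hderiv0 : deriv ((0:ℝ → ℝ)) = fun _ => (0:ℝ) := by
      funext θ; simp [Pi.zero_def]
    constructor
    · simp [tauLT, hderiv0]
    · simp [tauLT]
end

section
/- Let G be a locally compact abelian unimodular group with U(1)-central extension G^τ, and let L²(G,τ) denote the L²-sections of the associated line bundle (identified with L² functions on G^τ at level −1). Then the map m: L²(G) ⊗ C_c(G,τ) → C_c(G^τ, L²(G,τ)) defined by m(φ₁⊗φ₂)(x,g) := φ₁(x)φ₂(x⁻¹g) extends to an isometric isomorphism L²(G) ⊗ (G⋉_τℂ) ≅ G⋉_τ L²(G,τ) of (G⋉C₀(G))-(G⋉_τℂ)-bimodules. In particular it intertwines inner products: ⟨m(φ₁⊗φ₂), m(ψ₁⊗ψ₂)⟩_{G⋉_τℂ} = ⟨φ₁,ψ₁⟩_{L²(G)} · (φ₂* * ψ₂). -/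
/-!
The `G⋉_τℂ`-valued inner product of `m(φ₁⊗φ₂)` and `m(ψ₁⊗ψ₂)` at `g` is the integral of the
convolution of `conj φ₁ · ψ₁` with `h ↦ conj (φ₂ h) · ψ₂ (h g)`. By Fubini and left invariance of
Haar measure, the integral of a convolution is the product of the integrals.
-/

open MeasureTheory
open scoped ComplexConjugate

section

variable {G 𝕜 E : Type*} [Group G] [TopologicalSpace G] [IsTopologicalGroup G]

theorem HasCompactSupport.smul_comp_inv_mul [Zero 𝕜] [Zero E] [SMulWithZero 𝕜 E] {a : G → 𝕜}
    {b : G → E} (ha : HasCompactSupport a) (hb : HasCompactSupport b) :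
    HasCompactSupport fun p : G × G => a p.2 • b (p.2⁻¹ * p.1) := by
  refine .of_support_subset_isCompact
    ((ha.isCompact.mul hb.isCompact).prod ha.isCompact) fun p hp => ?_
  have hpa : p.2 ∈ tsupport a := subset_tsupport _ (left_ne_zero_of_smul hp)
  have hpb : p.2⁻¹ * p.1 ∈ tsupport b := subset_tsupport _ (right_ne_zero_of_smul hp)
  exact ⟨by simpa using Set.mul_mem_mul hpa hpb, hpa⟩

variable [MeasurableSpace G] [BorelSpace G] [RCLike 𝕜] [NormedAddCommGroup E]
  [NormedSpace ℝ E] [NormedSpace 𝕜 E] [CompleteSpace E]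

theorem integral_integral_smul_comp_inv_mul (μ : Measure G) [μ.IsHaarMeasure] {a : G → 𝕜}
    {b : G → E} (hac : Continuous a) (has : HasCompactSupport a) (hbc : Continuous b)
    (hbs : HasCompactSupport b) :
    ∫ h, ∫ x, a x • b (x⁻¹ * h) ∂μ ∂μ = (∫ x, a x ∂μ) • ∫ y, b y ∂μ := by
  have hcont : Continuous fun p : G × G => a p.2 • b (p.2⁻¹ * p.1) := by fun_prop
  rw [integral_integral_swap_of_hasCompactSupport (f := fun h x => a x • b (x⁻¹ * h)) hcont
    (has.smul_comp_inv_mul hbs), ← integral_smul_const]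
  congr 1 with x
  rw [integral_smul, integral_mul_left_eq_self b x⁻¹]

end

theorem stmt7_general {Gτ : Type*} [Group Gτ] [TopologicalSpace Gτ] [IsTopologicalGroup Gτ]
    [MeasurableSpace Gτ] [BorelSpace Gτ]
    (μ : Measure Gτ) [μ.IsHaarMeasure]
    (φ₁ ψ₁ φ₂ ψ₂ : Gτ → ℂ)
    (hφ₁c : Continuous φ₁) (hφ₁s : HasCompactSupport φ₁)
    (hψ₁c : Continuous ψ₁)
    (hφ₂c : Continuous φ₂) (hφ₂s : HasCompactSupport φ₂)
    (hψ₂c : Continuous ψ₂) :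
    ∀ g : Gτ,
      (∫ h, ∫ x, conj (φ₁ x * φ₂ (x⁻¹ * h)) * (ψ₁ x * ψ₂ (x⁻¹ * h * g)) ∂μ ∂μ) =
        (∫ x, conj (φ₁ x) * ψ₁ x ∂μ) * (∫ h, conj (φ₂ h) * ψ₂ (h * g) ∂μ) := by
  intro g
  have hsplit : ∀ h x, conj (φ₁ x * φ₂ (x⁻¹ * h)) * (ψ₁ x * ψ₂ (x⁻¹ * h * g)) =
      (conj (φ₁ x) * ψ₁ x) • (conj (φ₂ (x⁻¹ * h)) * ψ₂ (x⁻¹ * h * g)) := by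
    intro h x
    rw [map_mul, smul_eq_mul]
    ring
  simp_rw [hsplit]
  exact integral_integral_smul_comp_inv_mul μ (a := fun x => conj (φ₁ x) * ψ₁ x)
    (b := fun y => conj (φ₂ y) * ψ₂ (y * g)) (by fun_prop)
    (hφ₁s.comp_left (map_zero conj)).mul_right (by fun_prop)
    (hφ₂s.comp_left (map_zero conj)).mul_right

/-- For a locally compact abelian unimodular group `G` with
`U(1)`-central extension `G^τ`, the map `m(φ₁⊗φ₂)(x,g) = φ₁(x)φ₂(x⁻¹g)` extends to
an isometric isomorphism `L²(G) ⊗ (G⋉_τℂ) ≅ G⋉_τ L²(G,τ)`; in particular it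
intertwines the `G⋉_τℂ`-valued inner products:
`⟨m(φ₁⊗φ₂), m(ψ₁⊗ψ₂)⟩(g) = ⟨φ₁,ψ₁⟩ · (φ₂* * ψ₂)(g)`.
(Functions on `G` are represented as level-`0` functions on `G^τ`, and elements of
`C_c(G,τ)` as level-`1` functions on `G^τ`; all integrals are over `G^τ` with respect
to a (two-sided invariant) Haar measure.) -/
theorem stmt7 {Gτ : Type*} [Group Gτ] [TopologicalSpace Gτ] [IsTopologicalGroup Gτ]
    [MeasurableSpace Gτ] [BorelSpace Gτ] [LocallyCompactSpace Gτ]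
    (μ : Measure Gτ) [μ.IsHaarMeasure] [μ.IsMulRightInvariant]
    (i : Circle →* Gτ) (hcentral : ∀ (z : Circle) (g : Gτ), i z * g = g * i z)
    (φ₁ ψ₁ φ₂ ψ₂ : Gτ → ℂ)
    -- `φ₁, ψ₁` represent functions on `G`: level 0
    (hφ₁ : ∀ (z : Circle) (g : Gτ), φ₁ (i z * g) = φ₁ g)
    (hψ₁ : ∀ (z : Circle) (g : Gτ), ψ₁ (i z * g) = ψ₁ g)
    -- `φ₂, ψ₂ ∈ C_c(G,τ)`: level 1
    (hφ₂ : ∀ (z : Circle) (g : Gτ), φ₂ (i z * g) = (z : ℂ) * φ₂ g)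
    (hψ₂ : ∀ (z : Circle) (g : Gτ), ψ₂ (i z * g) = (z : ℂ) * ψ₂ g)
    (hφ₁c : Continuous φ₁) (hφ₁s : HasCompactSupport φ₁)
    (hψ₁c : Continuous ψ₁) (hψ₁s : HasCompactSupport ψ₁)
    (hφ₂c : Continuous φ₂) (hφ₂s : HasCompactSupport φ₂)
    (hψ₂c : Continuous ψ₂) (hψ₂s : HasCompactSupport ψ₂) :
    ∀ g : Gτ,
      (∫ h, ∫ x, conj (φ₁ x * φ₂ (x⁻¹ * h)) * (ψ₁ x * ψ₂ (x⁻¹ * h * g)) ∂μ ∂μ) =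
        (∫ x, conj (φ₁ x) * ψ₁ x ∂μ) * (∫ h, conj (φ₂ h) * ψ₂ (h * g) ∂μ) :=
  stmt7_general μ φ₁ ψ₁ φ₂ ψ₂ hφ₁c hφ₁s hψ₁c hφ₂c hφ₂s hψ₂c
end
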